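/- Let A be a bounded pseudo-hoop and F a normal filter of A. Then F is an involutive filter if and only if the quotient pseudo-hoop A/F is involutive. -/

import Mathlib

universe u v

class PseudoHoop (A : Type u) extends One A, Mul A where
  rimp : A → A → A
  limp : A → A → A
  mul_one' : ∀ x : A, x * 1 = x
  one_mul' : ∀ x : A, 1 * x = x
  rimp_self : ∀ x : A, rimp x x = 1
  limp_self : ∀ x : A, limp x x = 1
  mul_rimp : ∀ x y z : A, rimp (x * y) z = rimp x (rimp y z)
  mul_limp : ∀ x y z : A, limp (x * y) z = limp y (limp x z)
  div₁ : ∀ x y : A, (rimp x y) * x = (rimp y x) * y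
  div₂ : ∀ x y : A, (rimp x y) * x = x * (limp x y)
  div₃ : ∀ x y : A, x * (limp x y) = y * (limp y x)

namespace PseudoHoop

/-- The order on a pseudo-hoop: `x ≤ y` iff `x → y = 1`. -/
def ple {A : Type u} [PseudoHoop A] (x y : A) : Prop := rimp x y = 1

/-- The meet `x ∧ y = (x → y) ⊙ x`. -/
def meet {A : Type u} [PseudoHoop A] (x y : A) : A := (rimp x y) * x

/-- `x ∨₁ y = (x → y) ⇝ y`. -/
def join₁ {A : Type u} [PseudoHoop A] (x y : A) : A := limp (rimp x y) y

/-- `x ∨₂ y = (x ⇝ y) → y`. -/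
def join₂ {A : Type u} [PseudoHoop A] (x y : A) : A := rimp (limp x y) y

/-- Iterated implication: `x →⁰ y = y`, `x →ⁿ⁺¹ y = x → (x →ⁿ y)`. -/
def rimpPow {A : Type u} [PseudoHoop A] (x : A) : ℕ → A → A
  | 0, y => y
  | n + 1, y => rimp x (rimpPow x n y)

/-- A filter of a pseudo-hoop. -/
structure IsFilter {A : Type u} [PseudoHoop A] (F : Set A) : Prop where
  nonempty : F.Nonempty
  mul_mem : ∀ {x y : A}, x ∈ F → y ∈ F → x * y ∈ F
  upward : ∀ {x y : A}, x ∈ F → ple x y → y ∈ F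

/-- A normal filter: `x → y ∈ F` iff `x ⇝ y ∈ F`. -/
def IsNormalFilter {A : Type u} [PseudoHoop A] (F : Set A) : Prop :=
  IsFilter F ∧ ∀ x y : A, rimp x y ∈ F ↔ limp x y ∈ F

def IsProper {A : Type u} [PseudoHoop A] (F : Set A) : Prop := F ≠ Set.univ

/-- A pseudo-hoop is simple if `{1}` is its unique proper filter. -/
def IsSimple (A : Type u) [PseudoHoop A] : Prop :=
  ∀ F : Set A, IsFilter F → IsProper F → F = {1}

/-- A pseudo-hoop is Wajsberg if `x ∨₁ y = y ∨₁ x` and `x ∨₂ y = y ∨₂ x`. -/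
def IsWajsberg (A : Type u) [PseudoHoop A] : Prop :=
  ∀ x y : A, join₁ x y = join₁ y x ∧ join₂ x y = join₂ y x

/-- A fantastic filter. -/
def IsFantasticFilter {A : Type u} [PseudoHoop A] (F : Set A) : Prop :=
  IsFilter F ∧ ∀ x y : A,
    (rimp y x ∈ F → rimp (join₁ x y) x ∈ F) ∧
    (limp y x ∈ F → limp (join₂ x y) x ∈ F)

def IS₂ {A : Type u} [PseudoHoop A] (μ : A → A) : Prop :=
  ∀ x y : A, μ (x * y) = μ x * μ (limp x (x * y)) ∧
    μ (x * y) = μ (rimp y (x * y)) * μ y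

def IS₃ {A : Type u} [PseudoHoop A] (μ : A → A) : Prop :=
  ∀ x y : A, μ (μ x * μ y) = μ x * μ y

def IS₄ {A : Type u} [PseudoHoop A] (μ : A → A) : Prop :=
  ∀ x y : A, μ (rimp (μ x) (μ y)) = rimp (μ x) (μ y) ∧
    μ (limp (μ x) (μ y)) = limp (μ x) (μ y)

/-- Type I state operator. -/
def IsStateI {A : Type u} [PseudoHoop A] (μ : A → A) : Prop :=
  (∀ x y : A, μ (rimp x y) = rimp (μ (join₁ x y)) (μ y) ∧
      μ (limp x y) = limp (μ (join₂ x y)) (μ y)) ∧ IS₂ μ ∧ IS₃ μ ∧ IS₄ μ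

/-- Type II state operator. -/
def IsStateII {A : Type u} [PseudoHoop A] (μ : A → A) : Prop :=
  (∀ x y : A, μ (rimp x y) = rimp (μ (join₁ y x)) (μ y) ∧
      μ (limp x y) = limp (μ (join₂ y x)) (μ y)) ∧ IS₂ μ ∧ IS₃ μ ∧ IS₄ μ

/-- Type III state operator. -/
def IsStateIII {A : Type u} [PseudoHoop A] (μ : A → A) : Prop :=
  (∀ x y : A, μ (rimp x y) = rimp (μ x) (μ (meet x y)) ∧
      μ (limp x y) = limp (μ x) (μ (meet x y))) ∧ IS₂ μ ∧ IS₃ μ ∧ IS₄ μ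

end PseudoHoop

open PseudoHoop

/-- A bounded pseudo-hoop: a pseudo-hoop with a least element `0`. -/
class BoundedPseudoHoop (A : Type u) extends PseudoHoop A, Zero A where
  zero_le : ∀ x : A, rimp 0 x = 1

namespace BoundedPseudoHoop

/-- `x⁻ = x → 0`. -/
def negr {A : Type u} [BoundedPseudoHoop A] (x : A) : A := rimp x 0

/-- `x∼ = x ⇝ 0`. -/
def negl {A : Type u} [BoundedPseudoHoop A] (x : A) : A := limp x 0

/-- A bounded pseudo-hoop is good if `x⁻∼ = x∼⁻` for all `x`. -/
def IsGood (A : Type u) [BoundedPseudoHoop A] : Prop :=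
  ∀ x : A, negl (negr x) = negr (negl x)

/-- A bounded pseudo-hoop is involutive if `x⁻∼ = x∼⁻ = x` for all `x`. -/
def IsInvolutive (A : Type u) [BoundedPseudoHoop A] : Prop :=
  ∀ x : A, negl (negr x) = x ∧ negr (negl x) = x

/-- The set of dense elements. -/
def Den (A : Type u) [BoundedPseudoHoop A] : Set A :=
  {x : A | negl (negr x) = 1}

/-- An involutive filter: `x⁻∼ → x ∈ F` and `x∼⁻ ⇝ x ∈ F` for all `x`. -/
def IsInvolutiveFilter {A : Type u} [BoundedPseudoHoop A] (F : Set A) : Prop :=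
  IsFilter F ∧ ∀ x : A, rimp (negl (negr x)) x ∈ F ∧ limp (negr (negl x)) x ∈ F

end BoundedPseudoHoop

open BoundedPseudoHoop

/-! Every element lies below its double negations `x⁻∼` and `x∼⁻`, so half of each
`Θ_F`-relation is the implication `1 ∈ F`; normality of `F` converts `x∼⁻ ⇝ x ∈ F` into
`x∼⁻ → x ∈ F` and back. -/

namespace PseudoHoop

variable {A : Type u} [PseudoHoop A]

theorem one_rimp (y : A) : rimp 1 y = y := by
  have hle : rimp y (rimp 1 y) = 1 := by
    rw [← mul_rimp, mul_one', rimp_self]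
  have hge : rimp (rimp 1 y) y = 1 := by
    have h := mul_rimp (rimp 1 y) 1 y
    rwa [mul_one', rimp_self] at h
  have h := div₁ y (rimp 1 y)
  rwa [hle, hge, one_mul', one_mul', eq_comm] at h

theorem rimp_one (x : A) : rimp x 1 = 1 := by
  have h := div₁ 1 x
  rw [mul_one', one_rimp] at h
  calc rimp x 1 = rimp (rimp x 1 * x) 1 := by rw [← h]
    _ = 1 := by rw [mul_rimp, rimp_self]

theorem IsFilter.one_mem {F : Set A} (hF : IsFilter F) : (1 : A) ∈ F := by
  obtain ⟨a, ha⟩ := hF.nonempty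
  exact hF.upward ha (rimp_one a)

end PseudoHoop

namespace BoundedPseudoHoop

variable {A : Type u} [BoundedPseudoHoop A]

theorem negr_mul_self (x : A) : negr x * x = 0 := by
  have h := div₁ x (0 : A)
  rwa [zero_le, one_mul'] at h

theorem mul_negl_self (x : A) : x * negl x = 0 := by
  rw [negl, ← div₂]
  exact negr_mul_self x

theorem limp_negl_negr (x : A) : limp x (negl (negr x)) = 1 := by
  rw [negl, ← mul_limp, negr_mul_self, limp_self]

theorem rimp_negr_negl (x : A) : rimp x (negr (negl x)) = 1 := by
  rw [negr, ← mul_rimp, mul_negl_self, rimp_self]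

end BoundedPseudoHoop

/-- `F` is involutive iff the quotient `A/F` is involutive; the latter is expressed
via the congruence `Θ_F`: `[x]⁻∼ = [x]` and `[x]∼⁻ = [x]` in `A/F` means
`x⁻∼ Θ_F x` and `x∼⁻ Θ_F x`, where `a Θ_F b` iff `a → b ∈ F` and `b → a ∈ F`. -/
theorem stmt12 {A : Type u} [BoundedPseudoHoop A] (F : Set A)
    (hF : IsNormalFilter F) :
    IsInvolutiveFilter F ↔ ∀ x : A,
      (rimp (negl (negr x)) x ∈ F ∧ rimp x (negl (negr x)) ∈ F) ∧
      (rimp (negr (negl x)) x ∈ F ∧ rimp x (negr (negl x)) ∈ F) := by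
  obtain ⟨hfil, hnorm⟩ := hF
  have hle₁ (x : A) : rimp x (negl (negr x)) ∈ F :=
    (hnorm _ _).mpr (limp_negl_negr x ▸ hfil.one_mem)
  have hle₂ (x : A) : rimp x (negr (negl x)) ∈ F := rimp_negr_negl x ▸ hfil.one_mem
  constructor
  · rintro ⟨-, hinv⟩ x
    exact ⟨⟨(hinv x).1, hle₁ x⟩, (hnorm _ _).mpr (hinv x).2, hle₂ x⟩
  · intro h
    exact ⟨hfil, fun x => ⟨(h x).1.1, (hnorm _ _).mp (h x).2.1⟩⟩
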